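/- arXiv:2404.04418 — 3 statements merged into one kernel-verified Lean document; each statement's English description precedes it below -/
import Mathlib

section
/- Let I ⊆ ℝ be an open interval and let x₀, x₁, x₂ : I → ℝ² be differentiable functions such that for each t ∈ I the points x₀(t), x₁(t), x₂(t) are affinely independent. Fix real constants c₀, c₁, c₂. For each t ∈ I let φ_t : ℝ² → ℝ be the unique affine map with φ_t(xⱼ(t)) = cⱼ for j = 0, 1, 2, and let Ẋ_t : ℝ² → ℝ² be the unique affine map with Ẋ_t(xⱼ(t)) = xⱼ'(t) for j = 0, 1, 2. Then for every fixed x ∈ ℝ², the function t ↦ φ_t(x) is differentiable on I and ∂φ_t(x)/∂t = −⟨∇φ_t, Ẋ_t(x)⟩, where ∇φ_t ∈ ℝ² is the (constant) gradient of the affine map φ_t. -/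
/-!
Differentiating the interpolation conditions `⟪g t, xⱼ t⟫ + b₀ t = cⱼ` in `t` gives
`⟪ġ, xⱼ⟫ + ḃ₀ = -⟪g, ẋⱼ⟫ = -⟪g, W xⱼ⟫`, so the affine maps `p ↦ ⟪ġ, p⟫ + ḃ₀` and
`p ↦ -⟪g, W p⟫` agree at the vertices of the triangle, hence everywhere. That `g` and `b₀` are
differentiable at all comes from `(g t, b₀ t)` solving a linear system whose operator depends
differentiably on `t` and is invertible by affine independence; operator inversion is smooth.
-/

open Set Filter Topology Module ContinuousLinearMap

section InverseOperator

variable {𝕜 G E F : Type*} [NontriviallyNormedField 𝕜]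
  [NormedAddCommGroup G] [NormedSpace 𝕜 G]
  [NormedAddCommGroup E] [NormedSpace 𝕜 E] [CompleteSpace E]
  [NormedAddCommGroup F] [NormedSpace 𝕜 F]

theorem differentiableAt_of_eventually_apply_eq {L : G → E →L[𝕜] F} {y : G → E} {c : F} {t : G}
    (hL : DifferentiableAt 𝕜 L t) (hy : ∀ᶠ s in 𝓝 t, (L s).IsInvertible ∧ L s (y s) = c) :
    DifferentiableAt 𝕜 y t := by
  have hinv : DifferentiableAt 𝕜 (fun s => (L s).inverse c) t :=
    (((hy.self_of_nhds.1.contDiffAt_map_inverse (n := 1)).differentiableAt one_ne_zero).comp t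
      hL).clm_apply (differentiableAt_const c)
  refine hinv.congr_of_eventuallyEq ?_
  filter_upwards [hy] with s ⟨hs, hsy⟩
  rw [← hsy, hs.inverse_apply_self]

end InverseOperator

section AffineFunctional

variable {ι E : Type*} [NormedAddCommGroup E] [InnerProductSpace ℝ E]

theorem inner_add_eq_of_affineSpan_eq_top {X : ι → E} (hX : affineSpan ℝ (range X) = ⊤)
    {v : E} {β : ℝ} (f : E →ᵃ[ℝ] ℝ) (h : ∀ j, inner ℝ v (X j) + β = f (X j)) (p : E) :
    inner ℝ v p + β = f p := by
  have hf : (innerₛₗ ℝ v).toAffineMap + AffineMap.const ℝ E β = f :=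
    AffineMap.ext_on hX (by rintro _ ⟨j, rfl⟩; simpa using h j)
  simpa using congrArg (· p) hf

theorem inner_add_eq_neg_inner_of_hasDerivAt {g x : ℝ → E} {b : ℝ → ℝ} {g' x' : E}
    {b' c t : ℝ} (hg : HasDerivAt g g' t) (hx : HasDerivAt x x' t) (hb : HasDerivAt b b' t)
    (hc : ∀ᶠ s in 𝓝 t, inner ℝ (g s) (x s) + b s = c) :
    inner ℝ g' (x t) + b' = -inner ℝ (g t) x' := by
  have h := ((hg.inner ℝ hx).add hb).unique ((hasDerivAt_const t c).congr_of_eventuallyEq hc)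
  linarith

/-- `(v, β) : E × ℝ` stands for the affine functional `p ↦ ⟪v, p⟫ + β`, evaluated here at the
points `X j`. -/
noncomputable def vertexEval (X : ι → E) : E × ℝ →L[ℝ] ι → ℝ :=
  .pi fun j => (innerSL ℝ (X j)).comp (fst ℝ E ℝ) + snd ℝ E ℝ

@[simp]
theorem vertexEval_apply (X : ι → E) (u : E × ℝ) (j : ι) :
    vertexEval X u j = inner ℝ u.1 (X j) + u.2 := by
  simp [vertexEval, real_inner_comm]

theorem vertexEval_injective {X : ι → E} (hX : affineSpan ℝ (range X) = ⊤) :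
    Function.Injective (vertexEval X) := by
  refine (injective_iff_map_eq_zero _).2 ?_
  rintro ⟨v, β⟩ hu
  have hzero := inner_add_eq_of_affineSpan_eq_top hX 0 fun j => by simpa using congrFun hu j
  have hβ : β = 0 := by simpa using hzero 0
  have hv : v = 0 := by simpa [hβ] using hzero v
  simp [hv, hβ]

theorem isInvertible_vertexEval [Fintype ι] [FiniteDimensional ℝ E] {X : ι → E}
    (hX : AffineIndependent ℝ X) (hcard : Fintype.card ι = finrank ℝ E + 1) :
    (vertexEval X).IsInvertible := by
  have hspan := hX.affineSpan_eq_top_iff_card_eq_finrank_add_one.2 hcard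
  have hdim : finrank ℝ (E × ℝ) = finrank ℝ (ι → ℝ) := by simp [hcard]
  exact ⟨(LinearMap.linearEquivOfInjective _ (vertexEval_injective hspan) hdim)
    |>.toContinuousLinearEquiv, rfl⟩

theorem differentiableAt_vertexEval [Fintype ι] {X : ℝ → ι → E} {t : ℝ}
    (hX : ∀ j, DifferentiableAt ℝ (fun s => X s j) t) :
    DifferentiableAt ℝ (fun s => vertexEval (X s)) t := by
  have hpi := (differentiableAt_pi (F' := fun _ : ι => E × ℝ →L[ℝ] ℝ)
    (Φ := fun s j => (innerSL ℝ (X s j)).comp (fst ℝ E ℝ) + snd ℝ E ℝ)).2 fun j =>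
      (((innerSL ℝ).differentiableAt.comp t (hX j)).clm_comp (differentiableAt_const _)).add
        (differentiableAt_const _)
  -- The explicit types make unification see the `Pi` instances as the normed ones.
  have hequiv := ContinuousLinearEquiv.differentiableAt (𝕜 := ℝ) (E := ι → E × ℝ →L[ℝ] ℝ)
    (F := E × ℝ →L[ℝ] ι → ℝ) (piEquivL ℝ (E × ℝ) fun _ => ℝ)
    (x := fun j => (innerSL ℝ (X t j)).comp (fst ℝ E ℝ) + snd ℝ E ℝ)
  exact DifferentiableAt.comp (𝕜 := ℝ) (F := ι → E × ℝ →L[ℝ] ℝ) t hequiv hpi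

end AffineFunctional

/-- On an open interval `(a, b)`, let `x₀, x₁, x₂` be differentiable (with derivatives
`x'ⱼ`) and affinely independent vertex trajectories. For each `t`, let
`φ_t x = ⟪g t, x⟫ + b t` be the affine map with `φ_t (xⱼ t) = cⱼ` and let `Ẋ_t` be the
affine map with `Ẋ_t (xⱼ t) = x'ⱼ t`. Then for every fixed `x` the map `t ↦ φ_t x` is
differentiable with derivative `-⟪∇φ_t, Ẋ_t x⟫`, where `∇φ_t = g t`. -/
theorem basis_function_time_derivative
    (a b : ℝ)
    (x x' : Fin 3 → ℝ → EuclideanSpace ℝ (Fin 2))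
    (hx : ∀ j, ∀ t ∈ Ioo a b, HasDerivAt (x j) (x' j t) t)
    (hind : ∀ t ∈ Ioo a b, AffineIndependent ℝ (fun j => x j t))
    (c : Fin 3 → ℝ)
    (g : ℝ → EuclideanSpace ℝ (Fin 2)) (b₀ : ℝ → ℝ)
    (hφ : ∀ t ∈ Ioo a b, ∀ j, (inner ℝ (g t) (x j t) : ℝ) + b₀ t = c j)
    (W : ℝ → (EuclideanSpace ℝ (Fin 2) →ᵃ[ℝ] EuclideanSpace ℝ (Fin 2)))
    (hW : ∀ t ∈ Ioo a b, ∀ j, W t (x j t) = x' j t) :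
    ∀ p : EuclideanSpace ℝ (Fin 2), ∀ t ∈ Ioo a b,
      HasDerivAt (fun s => (inner ℝ (g s) p : ℝ) + b₀ s)
        (-(inner ℝ (g t) (W t p) : ℝ)) t := by
  intro p t ht
  have hnhds : Ioo a b ∈ 𝓝 t := isOpen_Ioo.mem_nhds ht
  have hcard : Fintype.card (Fin 3) = finrank ℝ (EuclideanSpace ℝ (Fin 2)) + 1 := by simp
  have hgb : DifferentiableAt ℝ (fun s => (g s, b₀ s)) t := by
    refine differentiableAt_of_eventually_apply_eq (c := c)
      (differentiableAt_vertexEval fun j => (hx j t ht).differentiableAt) ?_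
    filter_upwards [hnhds] with s hs
    exact ⟨isInvertible_vertexEval (hind s hs) hcard, funext fun j => by simp [hφ s hs j]⟩
  have hg : HasDerivAt g (deriv g t) t := hgb.fst.hasDerivAt
  have hb : HasDerivAt b₀ (deriv b₀ t) t := hgb.snd.hasDerivAt
  have hvert : ∀ j, inner ℝ (deriv g t) (x j t) + deriv b₀ t =
      (-(innerₛₗ ℝ (g t)).toAffineMap.comp (W t)) (x j t) := fun j => by
    simpa [hW t ht j] using inner_add_eq_neg_inner_of_hasDerivAt hg (hx j t ht) hb
      (eventually_of_mem hnhds fun s hs => hφ s hs j)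
  have hspan := (hind t ht).affineSpan_eq_top_iff_card_eq_finrank_add_one.2 hcard
  have hp := inner_add_eq_of_affineSpan_eq_top hspan _ hvert p
  refine ((hg.inner ℝ (hasDerivAt_const t p)).add hb).congr_deriv ?_
  rw [inner_zero_right, zero_add, hp]
  simp
end

section
/- Let I ⊆ ℝ be an open interval and let x₀, x₁, x₂ : I → ℝ² be differentiable functions such that for each t ∈ I the points x₀(t), x₁(t), x₂(t) are affinely independent. Let u₀, u₁, u₂ : I → ℝ be differentiable functions. For each t ∈ I, let u_t : ℝ² → ℝ be the unique affine map with u_t(xⱼ(t)) = uⱼ(t), let w_t : ℝ² → ℝ be the unique affine map with w_t(xⱼ(t)) = uⱼ'(t), and let Ẋ_t : ℝ² → ℝ² be the unique affine map with Ẋ_t(xⱼ(t)) = xⱼ'(t), for j = 0, 1, 2. Then for every fixed x ∈ ℝ², the function t ↦ u_t(x) is differentiable on I and ∂u_t(x)/∂t = w_t(x) − ⟨∇u_t, Ẋ_t(x)⟩, where ∇u_t ∈ ℝ² is the (constant) gradient of the affine map u_t. -/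
/-!
Write the fixed point `p` in barycentric coordinates `λⱼ(t)` with respect to the moving triangle.
They are `(p, 1)` pulled back through the map `w ↦ (∑ wⱼ • xⱼ(t), ∑ wⱼ)`, which is invertible and
depends differentiably on `t`; since inversion is smooth, the `λⱼ` are differentiable.
Then `u_t(p) = ∑ λⱼ uⱼ` has derivative `∑ λⱼ' uⱼ + ∑ λⱼ uⱼ'`. The second sum is `w_t(p)`.
Differentiating `∑ λⱼ = 1` and `∑ λⱼ xⱼ = p` gives `∑ λⱼ' = 0` and
`∑ λⱼ' xⱼ = -∑ λⱼ xⱼ' = -Ẋ_t(p)`, so the first sum is `-⟪∇u_t, Ẋ_t(p)⟫`.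
-/

open Real Set Filter Topology Module

section Barycentric

variable {ι E : Type*} [Fintype ι] [NormedAddCommGroup E] [NormedSpace ℝ E]

noncomputable def weightedSumMap (v : ι → E) : (ι → ℝ) →L[ℝ] E × ℝ :=
  ∑ i, (ContinuousLinearMap.proj i).smulRight (v i, (1 : ℝ))

@[simp]
theorem weightedSumMap_apply (v : ι → E) (w : ι → ℝ) :
    weightedSumMap v w = (∑ i, w i • v i, ∑ i, w i) := by
  ext <;> simp [weightedSumMap, Prod.fst_sum, Prod.snd_sum]

theorem differentiableAt_weightedSumMap {x : ι → ℝ → E} {t : ℝ}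
    (hx : ∀ i, DifferentiableAt ℝ (x i) t) :
    DifferentiableAt ℝ (fun s => weightedSumMap (x · s)) t := by
  unfold weightedSumMap
  refine DifferentiableAt.fun_sum fun i _ => ?_
  exact (ContinuousLinearMap.smulRightL ℝ (ι → ℝ) (E × ℝ)
    (.proj (R := ℝ) (φ := fun _ : ι => ℝ) i)).differentiableAt.comp t
      ((hx i).prodMk (differentiableAt_const _))

variable [FiniteDimensional ℝ E]

theorem isInvertible_weightedSumMap {v : ι → E} (hv : AffineIndependent ℝ v)
    (hcard : Fintype.card ι = finrank ℝ E + 1) : (weightedSumMap v).IsInvertible := by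
  have hinj : Function.Injective (weightedSumMap v) := by
    rw [injective_iff_map_eq_zero]
    intro w hw
    simp only [weightedSumMap_apply, Prod.mk_eq_zero] at hw
    funext i
    exact hv.eq_zero_of_sum_eq_zero hw.2 hw.1 i (Finset.mem_univ i)
  have hdim : finrank ℝ (ι → ℝ) = finrank ℝ (E × ℝ) := by simp [hcard]
  exact ⟨((weightedSumMap v : (ι → ℝ) →ₗ[ℝ] E × ℝ).linearEquivOfInjective hinj
    hdim).toContinuousLinearEquiv, rfl⟩

theorem exists_differentiableAt_barycentric {x : ι → ℝ → E} {t : ℝ}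
    (hcard : Fintype.card ι = finrank ℝ E + 1) (hx : ∀ i, DifferentiableAt ℝ (x i) t)
    (hind : ∀ᶠ s in 𝓝 t, AffineIndependent ℝ (x · s)) (p : E) :
    ∃ l : ι → ℝ → ℝ, (∀ i, DifferentiableAt ℝ (l i) t) ∧
      ∀ᶠ s in 𝓝 t, ∑ i, l i s = 1 ∧ ∑ i, l i s • x i s = p := by
  refine ⟨fun i s => (weightedSumMap (x · s)).inverse (p, 1) i, fun i => ?_, ?_⟩
  · have hinv := (isInvertible_weightedSumMap hind.self_of_nhds hcard).contDiffAt_map_inverse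
      (n := 1) |>.differentiableAt one_ne_zero
    exact (differentiableAt_apply i _).comp t
      (((hinv.comp t (differentiableAt_weightedSumMap hx)).clm_apply
        (differentiableAt_const _)))
  · filter_upwards [hind] with s hs
    have h := (isInvertible_weightedSumMap hs hcard).self_apply_inverse (p, 1)
    rw [weightedSumMap_apply, Prod.mk.injEq] at h
    exact ⟨h.2, h.1⟩

end Barycentric

theorem sum_deriv_eq_zero_of_eventually_sum_eq_one {ι : Type*} [Fintype ι] {l : ι → ℝ → ℝ}
    {l' : ι → ℝ} {t : ℝ} (hl : ∀ i, HasDerivAt (l i) (l' i) t)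
    (h : ∀ᶠ s in 𝓝 t, ∑ i, l i s = 1) : ∑ i, l' i = 0 :=
  (HasDerivAt.fun_sum fun i _ => hl i).unique ((hasDerivAt_const t 1).congr_of_eventuallyEq h)

theorem sum_deriv_smul_eq_neg_of_eventually_sum_smul_eq {ι E : Type*} [Fintype ι]
    [NormedAddCommGroup E] [NormedSpace ℝ E] {l : ι → ℝ → ℝ} {l' : ι → ℝ} {x : ι → ℝ → E}
    {x' : ι → E} {t : ℝ} {p : E} (hl : ∀ i, HasDerivAt (l i) (l' i) t)
    (hx : ∀ i, HasDerivAt (x i) (x' i) t) (h : ∀ᶠ s in 𝓝 t, ∑ i, l i s • x i s = p) :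
    ∑ i, l' i • x i t = -∑ i, l i t • x' i := by
  have hzero : ∑ i, (l i t • x' i + l' i • x i t) = 0 :=
    (HasDerivAt.fun_sum fun i _ => (hl i).smul (hx i)).unique
      ((hasDerivAt_const t p).congr_of_eventuallyEq h)
  rw [Finset.sum_add_distrib] at hzero
  exact eq_neg_of_add_eq_zero_right hzero

theorem sum_mul_inner_add {ι F : Type*} [NormedAddCommGroup F] [InnerProductSpace ℝ F]
    (s : Finset ι) (w : ι → ℝ) (g : F) (v : ι → F) (c : ℝ) :
    ∑ i ∈ s, w i * (inner ℝ g (v i) + c) = inner ℝ g (∑ i ∈ s, w i • v i) + (∑ i ∈ s, w i) * c := by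
  simp only [mul_add, Finset.sum_add_distrib, inner_sum, inner_smul_right, Finset.sum_mul]

theorem AffineMap.map_sum_smul {ι V W : Type*} [AddCommGroup V] [Module ℝ V] [AddCommGroup W]
    [Module ℝ W] (f : V →ᵃ[ℝ] W) (s : Finset ι) {w : ι → ℝ} (hw : ∑ i ∈ s, w i = 1) (v : ι → V) :
    f (∑ i ∈ s, w i • v i) = ∑ i ∈ s, w i • f (v i) := by
  rw [← s.affineCombination_eq_linear_combination v w hw, s.map_affineCombination v w hw,
    s.affineCombination_eq_linear_combination _ w hw, Function.comp_def]

/-- On an open interval `(a, b)`, let `x₀, x₁, x₂` be differentiable (with derivatives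
`x'ⱼ`) and affinely independent vertex trajectories, and `u₀, u₁, u₂` differentiable
nodal values (with derivatives `u'ⱼ`). For each `t`, let `u_t x = ⟪g t, x⟫ + b t` be the
affine map with `u_t (xⱼ t) = uⱼ t`, let `w_t x = ⟪gw t, x⟫ + bw t` be the affine map
with `w_t (xⱼ t) = u'ⱼ t`, and let `Ẋ_t` be the affine map with `Ẋ_t (xⱼ t) = x'ⱼ t`.
Then for every fixed `x` the map `t ↦ u_t x` is differentiable with derivative
`w_t x - ⟪∇u_t, Ẋ_t x⟫`, where `∇u_t = g t`. -/
theorem fe_solution_time_derivative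
    (a b : ℝ)
    (x x' : Fin 3 → ℝ → EuclideanSpace ℝ (Fin 2))
    (hx : ∀ j, ∀ t ∈ Ioo a b, HasDerivAt (x j) (x' j t) t)
    (hind : ∀ t ∈ Ioo a b, AffineIndependent ℝ (fun j => x j t))
    (u u' : Fin 3 → ℝ → ℝ)
    (hu : ∀ j, ∀ t ∈ Ioo a b, HasDerivAt (u j) (u' j t) t)
    (g : ℝ → EuclideanSpace ℝ (Fin 2)) (b₀ : ℝ → ℝ)
    (hg : ∀ t ∈ Ioo a b, ∀ j, (inner ℝ (g t) (x j t) : ℝ) + b₀ t = u j t)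
    (gw : ℝ → EuclideanSpace ℝ (Fin 2)) (bw : ℝ → ℝ)
    (hgw : ∀ t ∈ Ioo a b, ∀ j, (inner ℝ (gw t) (x j t) : ℝ) + bw t = u' j t)
    (W : ℝ → (EuclideanSpace ℝ (Fin 2) →ᵃ[ℝ] EuclideanSpace ℝ (Fin 2)))
    (hW : ∀ t ∈ Ioo a b, ∀ j, W t (x j t) = x' j t) :
    ∀ p : EuclideanSpace ℝ (Fin 2), ∀ t ∈ Ioo a b,
      HasDerivAt (fun s => (inner ℝ (g s) p : ℝ) + b₀ s)
        (((inner ℝ (gw t) p : ℝ) + bw t) - (inner ℝ (g t) (W t p) : ℝ)) t := by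
  intro p t ht
  have hnhds : Ioo a b ∈ 𝓝 t := Ioo_mem_nhds ht.1 ht.2
  obtain ⟨l, hl, hlp⟩ := exists_differentiableAt_barycentric (by simp)
    (fun j => (hx j t ht).differentiableAt) (eventually_of_mem hnhds hind) p
  obtain ⟨hl₁, hlx⟩ := hlp.self_of_nhds
  set l' := fun j => deriv (l j) t
  have hl' : ∀ j, HasDerivAt (l j) (l' j) t := fun j => (hl j).hasDerivAt
  have hl₁' : ∑ j, l' j = 0 :=
    sum_deriv_eq_zero_of_eventually_sum_eq_one hl' (hlp.mono fun _ hs => hs.1)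
  have hinterp : (fun s => inner ℝ (g s) p + b₀ s) =ᶠ[𝓝 t] fun s => ∑ j, l j s * u j s := by
    filter_upwards [hlp, hnhds] with s ⟨hs₁, hsx⟩ hs
    simp only [← hg s hs, sum_mul_inner_add, hsx, hs₁, one_mul]
  have hWp : W t p = ∑ j, l j t • x' j t := by
    rw [← hlx, AffineMap.map_sum_smul _ _ hl₁]
    simp only [hW t ht]
  have hlx' : ∑ j, l' j • x j t = -W t p := by
    rw [hWp]
    exact sum_deriv_smul_eq_neg_of_eventually_sum_smul_eq hl' (fun j => hx j t ht)
      (hlp.mono fun _ hs => hs.2)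
  refine ((HasDerivAt.fun_sum fun j _ => (hl' j).mul (hu j t ht)).congr_of_eventuallyEq
    hinterp).congr_deriv ?_
  calc ∑ j, (l' j * u j t + l j t * u' j t)
      = ∑ j, l' j * (inner ℝ (g t) (x j t) + b₀ t)
          + ∑ j, l j t * (inner ℝ (gw t) (x j t) + bw t) := by
        simp only [Finset.sum_add_distrib, hg t ht, hgw t ht]
    _ = inner ℝ (gw t) p + bw t - inner ℝ (g t) (W t p) := by
        rw [sum_mul_inner_add, sum_mul_inner_add, hl₁', hl₁, hlx, hlx', inner_neg_right]
        ring
end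

section
/- Let G : Matrix (Fin 2) (Fin 2) ℝ → ℝ be defined by G(J) = (1/3)·(trace(J·Jᵀ))^{3/2} + (2^{3/2}/3)·(det J)^{3/2}. Then for every J with det J > 0, G is Fréchet differentiable at J, and its derivative applied to a matrix H equals (trace(J·Jᵀ))^{1/2}·trace(Jᵀ·H) + 2^{1/2}·(det J)^{3/2}·trace(J⁻¹·H). -/
open Real Matrix

attribute [local instance] Matrix.normedAddCommGroup Matrix.normedSpace

noncomputable def entryCLM (i j : Fin 2) : Matrix (Fin 2) (Fin 2) ℝ →L[ℝ] ℝ :=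
  LinearMap.toContinuousLinearMap
    { toFun := fun K => K i j
      map_add' := fun _ _ => rfl
      map_smul' := fun _ _ => rfl }

@[simp] lemma entryCLM_apply (i j : Fin 2) (K : Matrix (Fin 2) (Fin 2) ℝ) :
    entryCLM i j K = K i j := rfl

lemma hasFDerivAt_entry (i j : Fin 2) (J : Matrix (Fin 2) (Fin 2) ℝ) :
    HasFDerivAt (fun K : Matrix (Fin 2) (Fin 2) ℝ => K i j) (entryCLM i j) J :=
  (entryCLM i j).hasFDerivAt

/-- For the mesh energy density
`G(J) = (1/3)·(trace(J·Jᵀ))^{3/2} + (2^{3/2}/3)·(det J)^{3/2}` on real 2×2 matrices and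
any `J` with `det J > 0`, `G` is differentiable at `J` and its Fréchet derivative applied
to `H` equals `(trace(J·Jᵀ))^{1/2}·trace(Jᵀ·H) + 2^{1/2}·(det J)^{3/2}·trace(J⁻¹·H)`. -/
theorem mesh_energy_density_derivative
    (J : Matrix (Fin 2) (Fin 2) ℝ) (hJ : 0 < J.det) :
    DifferentiableAt ℝ
      (fun K : Matrix (Fin 2) (Fin 2) ℝ =>
        (1 / 3 : ℝ) * (Matrix.trace (K * Kᵀ)) ^ ((3 : ℝ) / 2)
          + ((2 : ℝ) ^ ((3 : ℝ) / 2) / 3) * K.det ^ ((3 : ℝ) / 2)) J ∧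
    ∀ H : Matrix (Fin 2) (Fin 2) ℝ,
      fderiv ℝ
        (fun K : Matrix (Fin 2) (Fin 2) ℝ =>
          (1 / 3 : ℝ) * (Matrix.trace (K * Kᵀ)) ^ ((3 : ℝ) / 2)
            + ((2 : ℝ) ^ ((3 : ℝ) / 2) / 3) * K.det ^ ((3 : ℝ) / 2)) J H
      = (Matrix.trace (J * Jᵀ)) ^ ((1 : ℝ) / 2) * Matrix.trace (Jᵀ * H)
          + (2 : ℝ) ^ ((1 : ℝ) / 2) * J.det ^ ((3 : ℝ) / 2) * Matrix.trace (J⁻¹ * H) := by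
  have he : ∀ i j, HasFDerivAt (fun K : Matrix (Fin 2) (Fin 2) ℝ => K i j) (entryCLM i j) J :=
    fun i j => hasFDerivAt_entry i j J
  -- derivative of determinant
  have hdetfun : (fun K : Matrix (Fin 2) (Fin 2) ℝ => K.det)
      = fun K => K 0 0 * K 1 1 - K 0 1 * K 1 0 := by
    funext K; exact Matrix.det_fin_two K
  have hdet : HasFDerivAt (fun K : Matrix (Fin 2) (Fin 2) ℝ => K.det)
      ((J 0 0 • entryCLM 1 1 + J 1 1 • entryCLM 0 0)
        - (J 0 1 • entryCLM 1 0 + J 1 0 • entryCLM 0 1)) J := by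
    rw [hdetfun]
    exact ((he 0 0).mul (he 1 1)).sub ((he 0 1).mul (he 1 0))
  -- derivative of trace (K * Kᵀ)
  have htrfun : (fun K : Matrix (Fin 2) (Fin 2) ℝ => Matrix.trace (K * Kᵀ))
      = fun K => K 0 0 * K 0 0 + K 1 0 * K 1 0 + (K 0 1 * K 0 1 + K 1 1 * K 1 1) := by
    funext K
    simp [Matrix.trace_fin_two, Matrix.mul_apply, Fin.sum_univ_two, Matrix.transpose_apply]
    ring
  have htr : HasFDerivAt (fun K : Matrix (Fin 2) (Fin 2) ℝ => Matrix.trace (K * Kᵀ))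
      (((J 0 0 • entryCLM 0 0 + J 0 0 • entryCLM 0 0)
        + (J 1 0 • entryCLM 1 0 + J 1 0 • entryCLM 1 0))
        + ((J 0 1 • entryCLM 0 1 + J 0 1 • entryCLM 0 1)
        + (J 1 1 • entryCLM 1 1 + J 1 1 • entryCLM 1 1))) J := by
    rw [htrfun]
    exact (((he 0 0).mul (he 0 0)).add ((he 1 0).mul (he 1 0))).add
      (((he 0 1).mul (he 0 1)).add ((he 1 1).mul (he 1 1)))
  -- positivity of the trace
  have htrpos : 0 < Matrix.trace (J * Jᵀ) := by
    have hd := Matrix.det_fin_two J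
    have ht := congrFun htrfun J
    rw [ht]
    nlinarith [sq_nonneg (J 0 0 - J 1 1), sq_nonneg (J 0 1 + J 1 0), hJ, hd]
  -- rpow derivative
  have hr : ∀ t : ℝ, 0 < t →
      HasDerivAt (fun x : ℝ => x ^ ((3 : ℝ) / 2)) ((3 / 2) * t ^ ((1 : ℝ) / 2)) t := by
    intro t ht
    have := Real.hasDerivAt_rpow_const (x := t) (p := (3 : ℝ) / 2) (Or.inl ht.ne')
    convert this using 2
    norm_num
  -- assemble
  have hG : HasFDerivAt
      (fun K : Matrix (Fin 2) (Fin 2) ℝ =>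
        (1 / 3 : ℝ) * (Matrix.trace (K * Kᵀ)) ^ ((3 : ℝ) / 2)
          + ((2 : ℝ) ^ ((3 : ℝ) / 2) / 3) * K.det ^ ((3 : ℝ) / 2))
      ((1 / 3 : ℝ) • (((3 / 2) * (Matrix.trace (J * Jᵀ)) ^ ((1 : ℝ) / 2)) •
          (((J 0 0 • entryCLM 0 0 + J 0 0 • entryCLM 0 0)
            + (J 1 0 • entryCLM 1 0 + J 1 0 • entryCLM 1 0))
            + ((J 0 1 • entryCLM 0 1 + J 0 1 • entryCLM 0 1)
            + (J 1 1 • entryCLM 1 1 + J 1 1 • entryCLM 1 1))))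
        + ((2 : ℝ) ^ ((3 : ℝ) / 2) / 3) • (((3 / 2) * J.det ^ ((1 : ℝ) / 2)) •
          ((J 0 0 • entryCLM 1 1 + J 1 1 • entryCLM 0 0)
            - (J 0 1 • entryCLM 1 0 + J 1 0 • entryCLM 0 1)))) J := by
    exact (((hr _ htrpos).comp_hasFDerivAt J htr).const_mul _).add
      (((hr _ hJ).comp_hasFDerivAt J hdet).const_mul _)
  refine ⟨hG.differentiableAt, fun H => ?_⟩
  rw [hG.fderiv]
  -- evaluate both sides
  have hinv : J⁻¹ = (J.det)⁻¹ • J.adjugate := by rw [Matrix.inv_def, Ring.inverse_eq_inv]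
  have htrinv : Matrix.trace (J⁻¹ * H) = (J.det)⁻¹ * Matrix.trace (J.adjugate * H) := by
    rw [hinv, Matrix.smul_mul, Matrix.trace_smul, smul_eq_mul]
  have hdet32 : J.det ^ ((3 : ℝ) / 2) = J.det * J.det ^ ((1 : ℝ) / 2) := by
    rw [show (3 : ℝ) / 2 = 1 + 1 / 2 by norm_num, Real.rpow_add hJ, Real.rpow_one]
  have h232 : (2 : ℝ) ^ ((3 : ℝ) / 2) = 2 * (2 : ℝ) ^ ((1 : ℝ) / 2) := by
    rw [show (3 : ℝ) / 2 = 1 + 1 / 2 by norm_num, Real.rpow_add (by norm_num), Real.rpow_one]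
  have hadj : Matrix.trace (J.adjugate * H)
      = J 1 1 * H 0 0 - J 0 1 * H 1 0 - J 1 0 * H 0 1 + J 0 0 * H 1 1 := by
    simp [Matrix.adjugate_fin_two, Matrix.trace_fin_two, Matrix.mul_apply, Fin.sum_univ_two, Matrix.vecMul, dotProduct]
    ring
  have htrT : Matrix.trace (Jᵀ * H)
      = J 0 0 * H 0 0 + J 1 0 * H 1 0 + J 0 1 * H 0 1 + J 1 1 * H 1 1 := by
    simp [Matrix.trace_fin_two, Matrix.mul_apply, Fin.sum_univ_two, Matrix.transpose_apply]
    ring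
  simp only [ContinuousLinearMap.add_apply, ContinuousLinearMap.sub_apply,
    ContinuousLinearMap.smul_apply, entryCLM_apply, smul_eq_mul]
  rw [htrinv, hadj, htrT, hdet32, h232]
  field_simp
  ring
end
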